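/- arXiv:2206.13977 — 2 statements merged into one kernel-verified Lean document; each statement's English description precedes it below -/
import Mathlib

section
/- For every positive integer n and integer m, the identity ∏_{j=1}^n (λm + j)/n! = ∏_{j=1}^n ((λ/j)m + 1) holds where λ = lcm(1,2,…,n); in particular the Ehrhart polynomial of the product polytope [0,λ] × [0,λ/2] × ⋯ × [0,λ/n] equals that of λ·Σ_n. -/
/-- With `λ = lcm(1,…,n)`, the Ehrhart polynomial of `λ • Σ_n` equals that of the
product polytope `[0,λ] × [0,λ/2] × ⋯ × [0,λ/n]`. -/
theorem ehrhart_product_eq_simplex (n : ℕ) (hn : 0 < n) (m : ℤ) :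
    (∏ j ∈ Finset.Icc 1 n, ((((Finset.Icc 1 n).lcm id : ℕ) : ℚ) * (m : ℚ) + (j : ℚ))) /
        (n.factorial : ℚ) =
      ∏ j ∈ Finset.Icc 1 n,
        ((((Finset.Icc 1 n).lcm id / j : ℕ) : ℚ) * (m : ℚ) + 1) := by
  set L : ℕ := (Finset.Icc 1 n).lcm id with hL
  have key : ∀ j ∈ Finset.Icc 1 n,
      (((L / j : ℕ) : ℚ) * (m : ℚ) + 1) = ((L : ℚ) * m + j) / j := by
    intro j hj
    have hj1 : 1 ≤ j := (Finset.mem_Icc.mp hj).1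
    have hjd : (j : ℕ) ∣ L := Finset.dvd_lcm hj
    have hj0 : (j : ℚ) ≠ 0 := by positivity
    have hcast : ((L / j : ℕ) : ℚ) = (L : ℚ) / j := by
      rw [Nat.cast_div hjd hj0]
    rw [hcast]
    field_simp
  rw [Finset.prod_congr rfl key, Finset.prod_div_distrib]
  have hfac : (∏ j ∈ Finset.Icc 1 n, (j : ℚ)) = (n.factorial : ℚ) := by
    rw [← Nat.cast_prod, ← Finset.Ico_add_one_right_eq_Icc, Finset.prod_Ico_id_eq_factorial]
  rw [hfac]
end

section
/- The number of lattice points in the dilate m·Δ of the polytope Δ = conv{(0,0), (0,1), (1,1), (3,0)} ⊂ ℝ^2 equals 2m² + 3m + 1 for every natural number m; in particular Δ is Ehrhart-equivalent to 2·Σ_2. -/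
/-!
The convex hull of `(0,0), (0,1), (1,1), (3,0)` is the trapezoid `0 ≤ x, 0 ≤ y ≤ 1, x + 2y ≤ 3`,
so its `m`-th dilate is `0 ≤ x, 0 ≤ y ≤ m, x + 2y ≤ 3m`. Its lattice points in row `y = k`
are `0 ≤ x ≤ 3m - 2k`, and summing the row lengths gives
`∑_{k=0}^{m} (3m - 2k + 1) = (m + 1)(2m + 1) = 2m² + 3m + 1`.
-/

open Pointwise

def hirzebruchTrapezoid (t : ℝ) : Set (ℝ × ℝ) :=
  {q | 0 ≤ q.1 ∧ 0 ≤ q.2 ∧ q.2 ≤ t ∧ q.1 + 2 * q.2 ≤ 3 * t}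

theorem add_smul_add_smul_mem_convexHull {𝕜 E : Type*} [Field 𝕜] [LinearOrder 𝕜]
    [IsStrictOrderedRing 𝕜] [AddCommGroup E] [Module 𝕜 E]
    {s : Set E} {a b c : E} (ha : a ∈ s) (hb : b ∈ s) (hc : c ∈ s) {x y z : 𝕜}
    (hx : 0 ≤ x) (hy : 0 ≤ y) (hz : 0 ≤ z) (hxyz : x + y + z = 1) :
    x • a + y • b + z • c ∈ convexHull 𝕜 s := by
  have := (convex_convexHull 𝕜 s).sum_mem (t := Finset.univ) (w := ![x, y, z])
    (z := ![a, b, c]) (by intro i _; fin_cases i <;> simpa)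
    (by simpa [Fin.sum_univ_three] using hxyz)
    (by intro i _; fin_cases i <;> exact subset_convexHull 𝕜 s (by simpa))
  simpa [Fin.sum_univ_three] using this

theorem convex_hirzebruchTrapezoid (t : ℝ) : Convex ℝ (hirzebruchTrapezoid t) := by
  rintro q ⟨hq₁, hq₂, hq₃, hq₄⟩ r ⟨hr₁, hr₂, hr₃, hr₄⟩ a b ha hb hab
  simp only [hirzebruchTrapezoid, Set.mem_ofPred_eq, Prod.fst_add, Prod.snd_add,
    Prod.smul_fst, Prod.smul_snd, smul_eq_mul]
  refine ⟨by positivity, by positivity, ?_, ?_⟩ <;> nlinarith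

theorem convexHull_eq_hirzebruchTrapezoid :
    convexHull ℝ {((0 : ℝ), (0 : ℝ)), (0, 1), (1, 1), (3, 0)} = hirzebruchTrapezoid 1 := by
  refine (convexHull_min ?_ (convex_hirzebruchTrapezoid 1)).antisymm ?_
  · rintro q (rfl | rfl | rfl | rfl) <;> norm_num [hirzebruchTrapezoid]
  · rintro ⟨x, y⟩ ⟨hx, hy, hy₁, hxy⟩
    rcases le_total x y with h | h
    · have := add_smul_add_smul_mem_convexHull
        (s := {((0 : ℝ), (0 : ℝ)), (0, 1), (1, 1), (3, 0)}) (a := (0, 0)) (b := (0, 1)) (c := (1, 1))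
        (by simp) (by simp) (by simp) (sub_nonneg.2 hy₁) (sub_nonneg.2 h) hx (by ring)
      convert this using 1
      ext <;> simp
    · have := add_smul_add_smul_mem_convexHull
        (s := {((0 : ℝ), (0 : ℝ)), (0, 1), (1, 1), (3, 0)}) (a := (0, 0)) (b := (1, 1)) (c := (3, 0))
        (by simp) (by simp) (by simp) (x := 1 - y - (x - y) / 3) (y := y) (z := (x - y) / 3)
        (by linarith) hy (by linarith) (by ring)
      convert this using 1
      ext <;> simp

theorem smul_hirzebruchTrapezoid_one {t : ℝ} (ht : 0 ≤ t) :
    t • hirzebruchTrapezoid 1 = hirzebruchTrapezoid t := by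
  apply Set.Subset.antisymm
  · rintro _ ⟨q, ⟨hq₁, hq₂, hq₃, hq₄⟩, rfl⟩
    simp only [hirzebruchTrapezoid, Set.mem_ofPred_eq, Prod.smul_fst, Prod.smul_snd, smul_eq_mul]
    refine ⟨by positivity, by positivity, ?_, ?_⟩ <;> nlinarith
  rcases ht.eq_or_lt with rfl | ht
  · rintro q ⟨hq₁, hq₂, hq₃, hq₄⟩
    rw [Set.zero_smul_set ⟨0, by norm_num [hirzebruchTrapezoid]⟩]
    ext <;> simp <;> linarith
  · rintro q ⟨hq₁, hq₂, hq₃, hq₄⟩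
    rw [Set.mem_smul_set_iff_inv_smul_mem₀ ht.ne']
    simp only [hirzebruchTrapezoid, Set.mem_ofPred_eq, Prod.smul_fst, Prod.smul_snd, smul_eq_mul]
    refine ⟨by positivity, by positivity, ?_, ?_⟩
    · rw [inv_mul_le_iff₀ ht]; linarith
    · rw [← mul_assoc, mul_comm 2, mul_assoc, ← mul_add, inv_mul_le_iff₀ ht]; linarith

def hirzebruchLatticePoints (m : ℕ) : Finset (ℤ × ℤ) :=
  (Finset.range (m + 1)).biUnion fun k =>
    (Finset.range (3 * m - 2 * k + 1)).image fun j : ℕ => ((j : ℤ), (k : ℤ))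

theorem mem_hirzebruchLatticePoints {m : ℕ} {p : ℤ × ℤ} :
    p ∈ hirzebruchLatticePoints m ↔ ((p.1 : ℝ), (p.2 : ℝ)) ∈ hirzebruchTrapezoid m := by
  simp only [hirzebruchLatticePoints, hirzebruchTrapezoid, Finset.mem_biUnion, Finset.mem_range,
    Finset.mem_image, Set.mem_ofPred_eq]
  norm_cast
  constructor
  · rintro ⟨k, hk, j, hj, rfl⟩
    dsimp only
    omega
  · rintro ⟨h₁, h₂, h₃, h₄⟩
    exact ⟨p.2.toNat, by omega, p.1.toNat, by omega, by ext <;> simp [h₁, h₂]⟩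

theorem sum_range_succ_three_mul_sub_two_mul_add_one (m : ℕ) :
    ∑ k ∈ Finset.range (m + 1), (3 * m - 2 * k + 1) = 2 * m ^ 2 + 3 * m + 1 := by
  rw [← Finset.sum_range_reflect]
  have hrow : ∀ k ∈ Finset.range (m + 1), 3 * m - 2 * (m + 1 - 1 - k) + 1 = (m + 1) + 2 * k := by
    intro k hk
    rw [Finset.mem_range] at hk
    omega
  rw [Finset.sum_congr rfl hrow, Finset.sum_add_distrib, ← Finset.mul_sum, Finset.sum_const,
    Finset.card_range, smul_eq_mul]
  have := Finset.sum_range_id_mul_two (m + 1)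
  simp only [Nat.add_sub_cancel] at this
  linarith

theorem card_hirzebruchLatticePoints (m : ℕ) :
    (hirzebruchLatticePoints m).card = 2 * m ^ 2 + 3 * m + 1 := by
  rw [hirzebruchLatticePoints, Finset.card_biUnion, ← sum_range_succ_three_mul_sub_two_mul_add_one]
  · refine Finset.sum_congr rfl fun k _ => ?_
    rw [Finset.card_image_of_injective _ fun i j h => by simpa using h, Finset.card_range]
  · intro k _ l _ hkl
    simp only [Function.onFun, Finset.disjoint_left, Finset.mem_image]
    rintro _ ⟨i, _, rfl⟩ ⟨j, _, h⟩
    exact hkl (by simp_all)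

/-- The polytope `conv{(0,0),(0,1),(1,1),(3,0)}` has Ehrhart polynomial
`2m² + 3m + 1`, i.e. it is Ehrhart equivalent to `2 • Σ_2`. -/
theorem ehrhart_hirzebruch_polytope (m : ℕ) :
    Nat.card {p : ℤ × ℤ //
        ((p.1 : ℝ), (p.2 : ℝ)) ∈
          (m : ℝ) • convexHull ℝ {((0 : ℝ), (0 : ℝ)), (0, 1), (1, 1), (3, 0)}} =
      2 * m ^ 2 + 3 * m + 1 := by
  rw [convexHull_eq_hirzebruchTrapezoid, smul_hirzebruchTrapezoid_one (Nat.cast_nonneg m)]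
  calc _ = Nat.card (hirzebruchLatticePoints m) :=
        Nat.card_congr (Equiv.subtypeEquivRight fun _ => mem_hirzebruchLatticePoints.symm)
    _ = 2 * m ^ 2 + 3 * m + 1 := by
      rw [Nat.card_eq_fintype_card, Fintype.card_coe, card_hirzebruchLatticePoints]
end
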